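/- Let A be an n×n real matrix, F : ℝⁿ → ℝⁿ Lipschitz continuous with Lipschitz constant L, and set C′ = ‖A‖ + L. Let z : [0,1] → ℝⁿ be continuous with z(0) = 0 and x ∈ ℝⁿ. Suppose X, Y : [0,1] → ℝⁿ are continuous and satisfy X(t) = x + ∫₀ᵗ ( A X(s) + F(X(s)) ) ds + z(t) and Y(t) = x + ∫₀ᵗ ( A Y(s) + F(Y(s)) ) ds for all t ∈ [0,1]. Then |X(t) − Y(t)| ≤ |z(t)| + C′ ∫₀ᵗ |z(s)| e^{(t−s)C′} ds for all t ∈ [0,1]. -/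

import Mathlib

noncomputable section

/-- `ℝⁿ` as a Euclidean space. -/
abbrev En (n : ℕ) := EuclideanSpace ℝ (Fin n)

/-- A matrix acting on `ℝⁿ` as a continuous linear operator. -/
def matCLM (n : ℕ) (A : Matrix (Fin n) (Fin n) ℝ) : En n →L[ℝ] En n :=
  Matrix.toEuclideanCLM (𝕜 := ℝ) A

/-!
The difference `X - Y` satisfies `X t - Y t = ∫₀ᵗ (f (X s) - f (Y s)) ds + z t` for the
vector field `f = A + F`, which is Lipschitz with constant `C = ‖A‖ + L`; hence
`g = |X - Y|` obeys the linear integral inequality `g ≤ |z| + C ∫₀ᵗ g`. The integral form of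
Grönwall's lemma turns this into the claimed bound: `t ↦ ∫₀ᵗ |z(s)| e^{-Cs} ds - e^{-Ct} ∫₀ᵗ g`
vanishes at `0` and is nondecreasing.
-/

open Set intervalIntegral MeasureTheory

lemma hasDerivAt_integral_of_continuousOn_Icc {E : Type*} [NormedAddCommGroup E]
    [NormedSpace ℝ E] [CompleteSpace E] {g : ℝ → E} {a b t : ℝ}
    (hg : ContinuousOn g (Icc a b)) (ht : t ∈ Ioo a b) :
    HasDerivAt (fun u => ∫ s in a..u, g s) (g t) t :=
  integral_hasDerivAt_right
    ((hg.mono (uIcc_of_le ht.1.le ▸ Icc_subset_Icc_right ht.2.le)).intervalIntegrable)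
    ((hg.mono Ioo_subset_Icc_self).stronglyMeasurableAtFilter isOpen_Ioo t ht)
    (hg.continuousAt (Icc_mem_nhds ht.1 ht.2))

lemma continuousOn_integral_Icc {E : Type*} [NormedAddCommGroup E] [NormedSpace ℝ E]
    {g : ℝ → E} {a b : ℝ} (hab : a ≤ b)
    (hg : ContinuousOn g (Icc a b)) :
    ContinuousOn (fun u => ∫ s in a..u, g s) (Icc a b) := by
  rw [← uIcc_of_le hab] at hg ⊢
  exact continuousOn_primitive_interval (hg.integrableOn_compact isCompact_uIcc)

lemma integral_le_integral_mul_exp_of_le_add_mul_integral {g a : ℝ → ℝ} {C T : ℝ}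
    (hg : ContinuousOn g (Icc 0 T)) (ha : ContinuousOn a (Icc 0 T))
    (hle : ∀ t ∈ Icc 0 T, g t ≤ a t + C * ∫ s in (0:ℝ)..t, g s) {t : ℝ} (ht : t ∈ Icc 0 T) :
    ∫ s in (0:ℝ)..t, g s ≤ ∫ s in (0:ℝ)..t, a s * Real.exp ((t - s) * C) := by
  have hT : 0 ≤ T := ht.1.trans ht.2
  set u := fun t => ∫ s in (0:ℝ)..t, g s
  set b := fun s => a s * Real.exp (-C * s)
  have hb : ContinuousOn b (Icc 0 T) := ha.mul (by fun_prop)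
  set h := fun t => (∫ s in (0:ℝ)..t, b s) - Real.exp (-C * t) * u t
  have hderiv : ∀ t ∈ Ioo 0 T,
      HasDerivAt h (Real.exp (-C * t) * (a t + C * u t - g t)) t := by
    intro t ht
    have hexp : HasDerivAt (fun t => Real.exp (-C * t)) (Real.exp (-C * t) * -C) t := by
      simpa using ((hasDerivAt_id t).const_mul (-C)).exp
    refine ((hasDerivAt_integral_of_continuousOn_Icc hb ht).sub
      (hexp.mul (hasDerivAt_integral_of_continuousOn_Icc hg ht))).congr_deriv ?_
    simp only [b]
    ring
  have hmono : MonotoneOn h (Icc 0 T) := by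
    refine monotoneOn_of_hasDerivWithinAt_nonneg
      (f' := fun t => Real.exp (-C * t) * (a t + C * u t - g t)) (convex_Icc 0 T)
      ((continuousOn_integral_Icc hT hb).sub
        ((by fun_prop : Continuous fun t => Real.exp (-C * t)).continuousOn.mul
          (continuousOn_integral_Icc hT hg)))
      (fun t ht => ?_) (fun t ht => ?_) <;> rw [interior_Icc] at ht
    · exact (hderiv t ht).hasDerivWithinAt
    · have : 0 ≤ a t + C * u t - g t := sub_nonneg.2 (hle t (Ioo_subset_Icc_self ht))
      positivity
  have h_nonneg : 0 ≤ h t := by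
    simpa [h, u] using hmono ⟨le_rfl, hT⟩ ht ht.1
  calc u t = Real.exp (C * t) * (Real.exp (-C * t) * u t) := by
        rw [← mul_assoc, ← Real.exp_add]; simp
    _ ≤ Real.exp (C * t) * ∫ s in (0:ℝ)..t, b s := by
        gcongr; simp only [h] at h_nonneg; linarith
    _ = ∫ s in (0:ℝ)..t, a s * Real.exp ((t - s) * C) := by
        rw [← intervalIntegral.integral_const_mul]
        refine integral_congr fun s _ => ?_
        simp only [b]
        rw [mul_left_comm, ← Real.exp_add]
        ring_nf

lemma le_add_mul_integral_mul_exp_of_le_add_mul_integral {g a : ℝ → ℝ} {C T : ℝ}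
    (hC : 0 ≤ C) (hg : ContinuousOn g (Icc 0 T)) (ha : ContinuousOn a (Icc 0 T))
    (hle : ∀ t ∈ Icc 0 T, g t ≤ a t + C * ∫ s in (0:ℝ)..t, g s) {t : ℝ} (ht : t ∈ Icc 0 T) :
    g t ≤ a t + C * ∫ s in (0:ℝ)..t, a s * Real.exp ((t - s) * C) :=
  (hle t ht).trans <| by
    gcongr
    exact integral_le_integral_mul_exp_of_le_add_mul_integral hg ha hle ht

lemma norm_sub_le_add_mul_integral_of_eq_integral {E : Type*} [NormedAddCommGroup E]
    [NormedSpace ℝ E] [CompleteSpace E] {f : E → E} {K : NNReal} (hf : LipschitzWith K f)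
    {x : E} {X Y z : ℝ → E} {T : ℝ} (hX : ContinuousOn X (Icc 0 T))
    (hY : ContinuousOn Y (Icc 0 T))
    (heqX : ∀ t ∈ Icc 0 T, X t = x + (∫ s in (0:ℝ)..t, f (X s)) + z t)
    (heqY : ∀ t ∈ Icc 0 T, Y t = x + ∫ s in (0:ℝ)..t, f (Y s)) {t : ℝ} (ht : t ∈ Icc 0 T) :
    ‖X t - Y t‖ ≤ ‖z t‖ + K * ∫ s in (0:ℝ)..t, ‖X s - Y s‖ := by
  have hsub : uIcc 0 t ⊆ Icc 0 T := uIcc_of_le ht.1 ▸ Icc_subset_Icc_right ht.2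
  have hiX : IntervalIntegrable (fun s => f (X s)) volume 0 t :=
    (hf.continuous.comp_continuousOn (hX.mono hsub)).intervalIntegrable
  have hiY : IntervalIntegrable (fun s => f (Y s)) volume 0 t :=
    (hf.continuous.comp_continuousOn (hY.mono hsub)).intervalIntegrable
  calc ‖X t - Y t‖ = ‖(∫ s in (0:ℝ)..t, (f (X s) - f (Y s))) + z t‖ := by
        rw [heqX t ht, heqY t ht, integral_sub hiX hiY]; abel_nf
    _ ≤ ‖∫ s in (0:ℝ)..t, (f (X s) - f (Y s))‖ + ‖z t‖ := norm_add_le _ _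
    _ ≤ (∫ s in (0:ℝ)..t, K * ‖X s - Y s‖) + ‖z t‖ := by
        gcongr
        exact norm_integral_le_of_norm_le ht.1
          (Filter.Eventually.of_forall fun s _ => hf.norm_sub_le (X s) (Y s))
          (continuousOn_const.mul ((hX.sub hY).norm.mono hsub)).intervalIntegrable
    _ = ‖z t‖ + K * ∫ s in (0:ℝ)..t, ‖X s - Y s‖ := by
        rw [intervalIntegral.integral_const_mul, add_comm]

theorem stmt16_general (n : ℕ) (A : Matrix (Fin n) (Fin n) ℝ) (F : En n → En n)
    (L : NNReal) (hF : LipschitzWith L F)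
    (z : ℝ → En n) (hz : ContinuousOn z (Set.Icc 0 1))
    (x : En n) (X Y : ℝ → En n)
    (hX : ContinuousOn X (Set.Icc 0 1)) (hY : ContinuousOn Y (Set.Icc 0 1))
    (heqX : ∀ t ∈ Set.Icc (0 : ℝ) 1,
      X t = x + (∫ s in (0:ℝ)..t, (matCLM n A (X s) + F (X s))) + z t)
    (heqY : ∀ t ∈ Set.Icc (0 : ℝ) 1,
      Y t = x + ∫ s in (0:ℝ)..t, (matCLM n A (Y s) + F (Y s))) :
    ∀ t ∈ Set.Icc (0 : ℝ) 1,
      ‖X t - Y t‖ ≤ ‖z t‖ + (‖matCLM n A‖ + L) *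
        ∫ s in (0:ℝ)..t, ‖z s‖ * Real.exp ((t - s) * (‖matCLM n A‖ + L)) := by
  intro t ht
  have hf : LipschitzWith (‖matCLM n A‖₊ + L) fun y => matCLM n A y + F y :=
    (matCLM n A).lipschitz.add hF
  have hC : ((‖matCLM n A‖₊ + L : NNReal) : ℝ) = ‖matCLM n A‖ + L := by push_cast; rfl
  rw [← hC]
  exact le_add_mul_integral_mul_exp_of_le_add_mul_integral (by positivity) (hX.sub hY).norm
    hz.norm (fun s hs => norm_sub_le_add_mul_integral_of_eq_integral hf hX hY heqX heqY hs) ht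

/-- Gronwall-type comparison: if `X` solves the equation perturbed by `z`
and `Y` solves the unperturbed one, with the same initial datum `x`, then
`|X(t) − Y(t)| ≤ |z(t)| + C′ ∫₀ᵗ |z(s)| e^{(t−s)C′} ds` on `[0,1]`,
where `C′ = ‖A‖ + L`. -/
theorem stmt16 (n : ℕ) (A : Matrix (Fin n) (Fin n) ℝ) (F : En n → En n)
    (L : NNReal) (hF : LipschitzWith L F)
    (z : ℝ → En n) (hz : ContinuousOn z (Set.Icc 0 1)) (hz0 : z 0 = 0)
    (x : En n) (X Y : ℝ → En n)
    (hX : ContinuousOn X (Set.Icc 0 1)) (hY : ContinuousOn Y (Set.Icc 0 1))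
    (heqX : ∀ t ∈ Set.Icc (0 : ℝ) 1,
      X t = x + (∫ s in (0:ℝ)..t, (matCLM n A (X s) + F (X s))) + z t)
    (heqY : ∀ t ∈ Set.Icc (0 : ℝ) 1,
      Y t = x + ∫ s in (0:ℝ)..t, (matCLM n A (Y s) + F (Y s))) :
    ∀ t ∈ Set.Icc (0 : ℝ) 1,
      ‖X t - Y t‖ ≤ ‖z t‖ + (‖matCLM n A‖ + L) *
        ∫ s in (0:ℝ)..t, ‖z s‖ * Real.exp ((t - s) * (‖matCLM n A‖ + L)) :=
  stmt16_general n A F L hF z hz x X Y hX hY heqX heqY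

end
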